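/- arXiv:2505.24548 — 2 statements merged into one kernel-verified Lean document; each statement's English description precedes it below -/
import Mathlib

section
/- Let a, a_n : [0,1] × ℝ^d → ℝ^{d×d} be bounded, satisfy |a(t,x) − a(s,y)| ≤ A(|x−y|^γ + |t−s|^α), |a_n(t,x) − a_n(s,y)| ≤ A(|x−y|^γ + |t−s|^α), and sup |a − a_n| ≤ Δ_a. Let θ_{u,t_j}(y) and θ^n_{t_k,t_j}(y) be continuous and discrete backward flows satisfying |θ_{u,t_j}(y) − θ^n_{t_k,t_j}(y)| ≤ C_0(|u − t_k| + (Δ_b + n^{−β}))·(1+|y|) for u ∈ [t_k, t_{k+1}]. Then there exists C > 0 such that |∫_{t_i}^{t_j} a(u, θ_{u,t_j}(y)) du − (1/n)Σ_{k=i}^{j−1} a_n(t_k, θ^n_{t_k,t_j}(y))| ≤ C·(t_j − t_i)·(n^{−min(γ,α,β·γ)} + Δ_a + Δ_b^γ + Δ_b)·(1 + |y|). -/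
open Real MeasureTheory intervalIntegral

/-- Frobenius norm of a `d × d` real matrix. -/
noncomputable def frobNorm (d : ℕ) (M : Matrix (Fin d) (Fin d) ℝ) : ℝ :=
  Real.sqrt (∑ p : Fin d, ∑ q : Fin d, (M p q) ^ 2)

/-!
Split the integral over the grid cells `[k/n, (k+1)/n]` and compare it on each cell with the
constant `a_n(k/n, θⁿ_k)`. Pointwise, `a - a_n` costs `Δa`, and the Hölder modulus of `a_n`
turns the flow comparison `‖θ u - θⁿ_k‖ ≲ (1/n + Δb + n^{-β})(1 + ‖y‖)` into
`n^{-γ} + Δb^γ + n^{-βγ}` (by subadditivity of `x ↦ x^γ`, `γ ≤ 1`) and the time gap into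
`n^{-α}`. Summing over the `j - i` cells of length `1/n` gives the factor `t_j - t_i`; the
Frobenius norm is at most `d` times the largest entry.
-/

lemma abs_apply_le_frobNorm {d : ℕ} (M : Matrix (Fin d) (Fin d) ℝ) (p q : Fin d) :
    |M p q| ≤ frobNorm d M := by
  rw [frobNorm, ← Real.sqrt_sq_eq_abs]
  gcongr
  calc (M p q) ^ 2 ≤ ∑ q' : Fin d, (M p q') ^ 2 :=
        Finset.single_le_sum (f := fun q' => (M p q') ^ 2)
          (fun _ _ => sq_nonneg _) (Finset.mem_univ q)
    _ ≤ ∑ p' : Fin d, ∑ q' : Fin d, (M p' q') ^ 2 :=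
        Finset.single_le_sum (f := fun p' => ∑ q' : Fin d, (M p' q') ^ 2)
          (fun _ _ => Finset.sum_nonneg fun _ _ => sq_nonneg _) (Finset.mem_univ p)

lemma frobNorm_le_of_abs_apply_le {d : ℕ} (M : Matrix (Fin d) (Fin d) ℝ) {B : ℝ}
    (hB : 0 ≤ B) (h : ∀ p q, |M p q| ≤ B) : frobNorm d M ≤ d * B := by
  rw [frobNorm, Real.sqrt_le_left (by positivity)]
  calc ∑ p : Fin d, ∑ q : Fin d, (M p q) ^ 2 ≤ ∑ _p : Fin d, ∑ _q : Fin d, B ^ 2 := by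
        refine Finset.sum_le_sum fun p _ => Finset.sum_le_sum fun q _ => ?_
        exact sq_le_sq' (abs_le.mp (h p q)).1 (abs_le.mp (h p q)).2
    _ = (d * B) ^ 2 := by simp; ring

lemma continuous_apply_comp_of_holder {E : Type*} [SeminormedAddCommGroup E] {d : ℕ}
    {A γ α : ℝ} (hγ : 0 < γ) (hα : 0 < α) {a : ℝ → E → Matrix (Fin d) (Fin d) ℝ}
    (ha : ∀ (t s : ℝ) (x y : E), frobNorm d (a t x - a s y) ≤ A * (‖x - y‖ ^ γ + |t - s| ^ α))
    {θ : ℝ → E} (hθ : Continuous θ) (p q : Fin d) :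
    Continuous fun u => a u (θ u) p q := by
  refine continuous_iff_continuousAt.mpr fun u => ?_
  let ω : ℝ → ℝ := fun v => A * (‖θ v - θ u‖ ^ γ + |v - u| ^ α)
  have hω : Continuous ω :=
    continuous_const.mul
      (((continuous_rpow_const hγ.le).comp (hθ.sub continuous_const).norm).add
        ((continuous_rpow_const hα.le).comp (continuous_id.sub continuous_const).abs))
  have hωu : ω u = 0 := by simp [ω, zero_rpow hγ.ne', zero_rpow hα.ne']
  rw [ContinuousAt, tendsto_iff_dist_tendsto_zero]
  refine squeeze_zero (fun _ => dist_nonneg) (fun v => ?_) (hωu ▸ hω.tendsto u)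
  simpa [Real.dist_eq] using
    (abs_apply_le_frobNorm (a v (θ v) - a u (θ u)) p q).trans (ha v u (θ v) (θ u))

lemma abs_intervalIntegral_sub_riemannSum_le {f : ℝ → ℝ} {c : ℕ → ℝ} {n i j : ℕ} {B : ℝ}
    (hij : i ≤ j)
    (hf : ∀ k ∈ Finset.Ico i j, IntervalIntegrable f volume ((k : ℝ) / n) (((k : ℝ) + 1) / n))
    (hB : ∀ k ∈ Finset.Ico i j, ∀ u ∈ Set.Icc ((k : ℝ) / n) (((k : ℝ) + 1) / n),
      |f u - c k| ≤ B) :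
    |(∫ u in ((i : ℝ) / n)..((j : ℝ) / n), f u) - (1 / (n : ℝ)) * ∑ k ∈ Finset.Ico i j, c k|
      ≤ ((j : ℝ) / n - (i : ℝ) / n) * B := by
  have hcell : ∀ k ∈ Finset.Ico i j,
      |∫ u in ((k : ℝ) / n)..(((k : ℝ) + 1) / n), (f u - c k)| ≤ B * (1 / n) := by
    intro k hk
    have hle : (k : ℝ) / n ≤ ((k : ℝ) + 1) / n := by gcongr; linarith
    have hnorm : ∀ u ∈ Set.uIoc ((k : ℝ) / n) (((k : ℝ) + 1) / n), ‖f u - c k‖ ≤ B := by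
      rw [Set.uIoc_of_le hle]
      exact fun u hu => hB k hk u (Set.Ioc_subset_Icc_self hu)
    have hlen : |((k : ℝ) + 1) / n - (k : ℝ) / n| = 1 / n := by
      rw [show ((k : ℝ) + 1) / n - (k : ℝ) / n = 1 / n by ring, abs_of_nonneg (by positivity)]
    simpa [hlen] using norm_integral_le_of_norm_le_const hnorm
  have hsplit : (∫ u in ((i : ℝ) / n)..((j : ℝ) / n), f u) -
      (1 / (n : ℝ)) * ∑ k ∈ Finset.Ico i j, c k =
        ∑ k ∈ Finset.Ico i j, ∫ u in ((k : ℝ) / n)..(((k : ℝ) + 1) / n), (f u - c k) := by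
    rw [← sum_integral_adjacent_intervals_Ico (a := fun k : ℕ => (k : ℝ) / n) hij
      (by simpa using hf), Finset.mul_sum, ← Finset.sum_sub_distrib]
    refine Finset.sum_congr rfl fun k hk => ?_
    rw [integral_sub (by simpa using hf k hk) intervalIntegrable_const,
      intervalIntegral.integral_const, smul_eq_mul]
    push_cast
    ring
  calc _ ≤ ∑ k ∈ Finset.Ico i j, |∫ u in ((k : ℝ) / n)..(((k : ℝ) + 1) / n), (f u - c k)| := by
        rw [hsplit]; exact Finset.abs_sum_le_sum_abs _ _
    _ ≤ ∑ _k ∈ Finset.Ico i j, B * (1 / n) := Finset.sum_le_sum hcell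
    _ = ((j : ℝ) / n - (i : ℝ) / n) * B := by
        rw [Finset.sum_const, Nat.card_Ico, nsmul_eq_mul, Nat.cast_sub hij]; ring

lemma rpow_le_natCast_rpow_neg {s e m : ℝ} {n : ℕ} (hn : 0 < n) (hs0 : 0 ≤ s) (hs : s ≤ 1 / n)
    (he : 0 ≤ e) (hme : m ≤ e) : s ^ e ≤ (n : ℝ) ^ (-m) := by
  have hn1 : (1 : ℝ) ≤ n := by exact_mod_cast hn
  calc s ^ e ≤ (1 / (n : ℝ)) ^ e := rpow_le_rpow hs0 hs he
    _ = (n : ℝ) ^ (-e) := by rw [one_div, inv_rpow (by positivity), rpow_neg (by positivity)]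
    _ ≤ (n : ℝ) ^ (-m) := rpow_le_rpow_of_exponent_le hn1 (neg_le_neg hme)

lemma rpow_add_add_natCast_rpow_neg_le {s Δ β γ m : ℝ} {n : ℕ} (hn : 0 < n) (hs0 : 0 ≤ s)
    (hs : s ≤ 1 / n) (hΔ : 0 ≤ Δ) (hγ0 : 0 ≤ γ) (hγ1 : γ ≤ 1) (hmγ : m ≤ γ)
    (hmβγ : m ≤ β * γ) :
    (s + (Δ + (n : ℝ) ^ (-β))) ^ γ ≤ 2 * (n : ℝ) ^ (-m) + Δ ^ γ := by
  have hn1 : (1 : ℝ) ≤ n := by exact_mod_cast hn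
  have hnβ : 0 ≤ (n : ℝ) ^ (-β) := by positivity
  have hs_pow : s ^ γ ≤ (n : ℝ) ^ (-m) := rpow_le_natCast_rpow_neg hn hs0 hs hγ0 hmγ
  have hnβ_pow : ((n : ℝ) ^ (-β)) ^ γ ≤ (n : ℝ) ^ (-m) := by
    rw [← rpow_mul (by positivity), neg_mul]
    exact rpow_le_rpow_of_exponent_le hn1 (neg_le_neg hmβγ)
  calc (s + (Δ + (n : ℝ) ^ (-β))) ^ γ ≤ s ^ γ + (Δ + (n : ℝ) ^ (-β)) ^ γ :=
        rpow_add_le_add_rpow hs0 (by positivity) hγ0 hγ1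
    _ ≤ s ^ γ + (Δ ^ γ + ((n : ℝ) ^ (-β)) ^ γ) := by
        gcongr; exact rpow_add_le_add_rpow hΔ hnβ hγ0 hγ1
    _ ≤ 2 * (n : ℝ) ^ (-m) + Δ ^ γ := by linarith

lemma add_mul_rpow_add_rpow_le {A γ α β C0 Δa Δb r s Y : ℝ} {n : ℕ} (hn : 0 < n) (hA : 0 ≤ A)
    (hγ0 : 0 ≤ γ) (hγ1 : γ ≤ 1) (hα0 : 0 ≤ α) (hC0 : 0 ≤ C0) (hΔa : 0 ≤ Δa) (hΔb : 0 ≤ Δb)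
    (hY : 1 ≤ Y) (hr0 : 0 ≤ r) (hs0 : 0 ≤ s) (hs : s ≤ 1 / n)
    (hr : r ≤ C0 * (s + (Δb + (n : ℝ) ^ (-β))) * Y) :
    Δa + A * (r ^ γ + s ^ α) ≤ (1 + A * (1 + 2 * C0 ^ γ)) *
      ((n : ℝ) ^ (-min γ (min α (β * γ))) + Δa + Δb ^ γ + Δb) * Y := by
  set m := min γ (min α (β * γ))
  set N := (n : ℝ) ^ (-m)
  set T := N + Δa + Δb ^ γ + Δb
  have hN : 0 ≤ N := by positivity
  have hΔbγ : 0 ≤ Δb ^ γ := by positivity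
  have hs_pow : s ^ α ≤ N :=
    rpow_le_natCast_rpow_neg hn hs0 hs hα0 ((min_le_right _ _).trans (min_le_left _ _))
  have hr_pow : r ^ γ ≤ C0 ^ γ * (2 * T) * Y := by
    calc r ^ γ ≤ (C0 * (s + (Δb + (n : ℝ) ^ (-β))) * Y) ^ γ := rpow_le_rpow hr0 hr hγ0
      _ = C0 ^ γ * (s + (Δb + (n : ℝ) ^ (-β))) ^ γ * Y ^ γ := by
        rw [mul_rpow (by positivity) (by linarith), mul_rpow hC0 (by positivity)]
      _ ≤ C0 ^ γ * (2 * T) * Y := by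
        gcongr
        · calc _ ≤ 2 * N + Δb ^ γ :=
                rpow_add_add_natCast_rpow_neg_le hn hs0 hs hΔb hγ0 hγ1 (min_le_left _ _)
                  ((min_le_right _ _).trans (min_le_right _ _))
            _ ≤ 2 * T := by linarith
        · exact rpow_le_self_of_one_le hY hγ1
  have hT : 0 ≤ T := by positivity
  have hTY : T ≤ T * Y := le_mul_of_one_le_right hT hY
  have hC0γ : 0 ≤ C0 ^ γ := by positivity
  calc Δa + A * (r ^ γ + s ^ α) ≤ T + A * (C0 ^ γ * (2 * T) * Y + T) := by
        gcongr <;> linarith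
    _ ≤ (1 + A * (1 + 2 * C0 ^ γ)) * T * Y := by
        nlinarith [mul_le_mul_of_nonneg_left hTY hA, mul_nonneg hA hC0γ]

lemma abs_apply_sub_le_of_holder_of_approx {E : Type*} [SeminormedAddCommGroup E] {d : ℕ}
    {A γ α Δa : ℝ} {a an : ℝ → E → Matrix (Fin d) (Fin d) ℝ}
    (han : ∀ (t s : ℝ) (x y : E),
      frobNorm d (an t x - an s y) ≤ A * (‖x - y‖ ^ γ + |t - s| ^ α))
    (hdiff : ∀ t x, frobNorm d (a t x - an t x) ≤ Δa) (t s : ℝ) (x y : E) (p q : Fin d) :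
    |a t x p q - an s y p q| ≤ Δa + A * (‖x - y‖ ^ γ + |t - s| ^ α) := by
  have h₁ := (abs_apply_le_frobNorm (a t x - an t x) p q).trans (hdiff t x)
  have h₂ := (abs_apply_le_frobNorm (an t x - an s y) p q).trans (han t s x y)
  rw [Matrix.sub_apply] at h₁ h₂
  exact (abs_sub_le _ _ _).trans (add_le_add h₁ h₂)

theorem stmt_14_general (d : ℕ) (A γ α β Λ : ℝ)
    (hA : 0 ≤ A) (hγ0 : 0 < γ) (hγ1 : γ ≤ 1) (hα0 : 0 < α)
    (C0 : ℝ) (hC0 : 0 ≤ C0) :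
    ∃ C > 0,
      ∀ (a an : ℝ → EuclideanSpace ℝ (Fin d) → Matrix (Fin d) (Fin d) ℝ),
        (∀ t x, frobNorm d (a t x) ≤ Λ) →
        (∀ t x, frobNorm d (an t x) ≤ Λ) →
        (∀ (t s : ℝ) (x y : EuclideanSpace ℝ (Fin d)),
          frobNorm d (a t x - a s y) ≤ A * (‖x - y‖ ^ γ + |t - s| ^ α)) →
        (∀ (t s : ℝ) (x y : EuclideanSpace ℝ (Fin d)),
          frobNorm d (an t x - an s y) ≤ A * (‖x - y‖ ^ γ + |t - s| ^ α)) →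
        ∀ (Δa Δb : ℝ), 0 ≤ Δa → 0 ≤ Δb →
        (∀ t x, frobNorm d (a t x - an t x) ≤ Δa) →
        ∀ (n i j : ℕ), 0 < n → i ≤ j → j ≤ n →
        ∀ (y : EuclideanSpace ℝ (Fin d))
          (θ : ℝ → EuclideanSpace ℝ (Fin d)) (θn : ℕ → EuclideanSpace ℝ (Fin d)),
          (Continuous θ) →
          (∀ k ∈ Finset.Ico i j, ∀ u ∈ Set.Icc ((k : ℝ) / n) (((k : ℝ) + 1) / n),
            ‖θ u - θn k‖ ≤ C0 * (|u - (k : ℝ) / n| + (Δb + (n : ℝ) ^ (-β))) * (1 + ‖y‖)) →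
          frobNorm d
            ((Matrix.of fun p q =>
                ∫ u in ((i : ℝ) / n)..((j : ℝ) / n), a u (θ u) p q) -
              (1 / (n : ℝ)) • ∑ k ∈ Finset.Ico i j, an ((k : ℝ) / n) (θn k)) ≤
            C * ((j : ℝ) / n - (i : ℝ) / n) *
              ((n : ℝ) ^ (-min γ (min α (β * γ))) + Δa + Δb ^ γ + Δb) * (1 + ‖y‖) := by
  refine ⟨(d + 1) * (1 + A * (1 + 2 * C0 ^ γ)), by positivity, ?_⟩
  intro a an _ _ ha han Δa Δb hΔa hΔb hdiff n i j hn hij _ y θ θn hθ hflow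
  set B := (1 + A * (1 + 2 * C0 ^ γ)) *
    ((n : ℝ) ^ (-min γ (min α (β * γ))) + Δa + Δb ^ γ + Δb) * (1 + ‖y‖)
  have hcell : ∀ k ∈ Finset.Ico i j, ∀ u ∈ Set.Icc ((k : ℝ) / n) (((k : ℝ) + 1) / n),
      ∀ p q, |a u (θ u) p q - an ((k : ℝ) / n) (θn k) p q| ≤ B := by
    intro k hk u hu p q
    have hs : |u - (k : ℝ) / n| ≤ 1 / n := by
      rw [abs_of_nonneg (sub_nonneg.2 hu.1)]
      linarith [hu.2, add_div (k : ℝ) 1 n]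
    exact (abs_apply_sub_le_of_holder_of_approx han hdiff _ _ _ _ p q).trans
      (add_mul_rpow_add_rpow_le hn hA hγ0.le hγ1 hα0.le hC0 hΔa hΔb (by simp) (norm_nonneg _)
        (abs_nonneg _) hs (hflow k hk u hu))
  have hentry : ∀ p q,
      |((Matrix.of fun p q => ∫ u in ((i : ℝ) / n)..((j : ℝ) / n), a u (θ u) p q) -
        (1 / (n : ℝ)) • ∑ k ∈ Finset.Ico i j, an ((k : ℝ) / n) (θn k)) p q|
          ≤ ((j : ℝ) / n - (i : ℝ) / n) * B := by
    intro p q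
    simpa [Matrix.sum_apply] using abs_intervalIntegral_sub_riemannSum_le hij
      (fun _ _ => (continuous_apply_comp_of_holder hγ0 hα0 ha hθ p q).intervalIntegrable _ _)
      (fun k hk u hu => hcell k hk u hu p q)
  have hlen : 0 ≤ (j : ℝ) / n - (i : ℝ) / n := sub_nonneg.2 (by gcongr)
  calc _ ≤ d * (((j : ℝ) / n - (i : ℝ) / n) * B) :=
        frobNorm_le_of_abs_apply_le _ (by positivity) hentry
    _ ≤ (d + 1) * (((j : ℝ) / n - (i : ℝ) / n) * B) := by gcongr; linarith
    _ = _ := by ring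

/-- comparison of the covariance of the frozen continuous Gaussian
process with that of the frozen Markov chain. -/
theorem stmt_14 (d : ℕ) (A γ α β Λ : ℝ)
    (hA : 0 ≤ A) (hγ0 : 0 < γ) (hγ1 : γ ≤ 1) (hα0 : 0 < α) (hα1 : α ≤ 1)
    (hβ0 : 0 < β) (hβ1 : β ≤ 1) (hΛ : 0 < Λ) (C0 : ℝ) (hC0 : 0 ≤ C0) :
    ∃ C > 0,
      ∀ (a an : ℝ → EuclideanSpace ℝ (Fin d) → Matrix (Fin d) (Fin d) ℝ),
        (∀ t x, frobNorm d (a t x) ≤ Λ) →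
        (∀ t x, frobNorm d (an t x) ≤ Λ) →
        (∀ (t s : ℝ) (x y : EuclideanSpace ℝ (Fin d)),
          frobNorm d (a t x - a s y) ≤ A * (‖x - y‖ ^ γ + |t - s| ^ α)) →
        (∀ (t s : ℝ) (x y : EuclideanSpace ℝ (Fin d)),
          frobNorm d (an t x - an s y) ≤ A * (‖x - y‖ ^ γ + |t - s| ^ α)) →
        ∀ (Δa Δb : ℝ), 0 ≤ Δa → 0 ≤ Δb →
        (∀ t x, frobNorm d (a t x - an t x) ≤ Δa) →
        ∀ (n i j : ℕ), 0 < n → i ≤ j → j ≤ n →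
        ∀ (y : EuclideanSpace ℝ (Fin d))
          (θ : ℝ → EuclideanSpace ℝ (Fin d)) (θn : ℕ → EuclideanSpace ℝ (Fin d)),
          (Continuous θ) →
          (∀ k ∈ Finset.Ico i j, ∀ u ∈ Set.Icc ((k : ℝ) / n) (((k : ℝ) + 1) / n),
            ‖θ u - θn k‖ ≤ C0 * (|u - (k : ℝ) / n| + (Δb + (n : ℝ) ^ (-β))) * (1 + ‖y‖)) →
          frobNorm d
            ((Matrix.of fun p q =>
                ∫ u in ((i : ℝ) / n)..((j : ℝ) / n), a u (θ u) p q) -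
              (1 / (n : ℝ)) • ∑ k ∈ Finset.Ico i j, an ((k : ℝ) / n) (θn k)) ≤
            C * ((j : ℝ) / n - (i : ℝ) / n) *
              ((n : ℝ) ^ (-min γ (min α (β * γ))) + Δa + Δb ^ γ + Δb) * (1 + ‖y‖) :=
  stmt_14_general d A γ α β Λ hA hγ0 hγ1 hα0 C0 hC0
end

section
/- Let p, q : collections of Gaussian densities on ℝ^d with means μ_p, μ_q and covariance matrices Σ_p, Σ_q, both satisfying Λ^{-1}tI ≤ Σ ≤ ΛtI for some Λ ≥ 1 and t > 0. Then there is a constant C depending only on d and Λ such that sup_{y} |p(y) − q(y)| ≤ C·t^{−(d+1)/2}·(|μ_p − μ_q| + t^{−1/2}|Σ_p − Σ_q|). -/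
open Real Matrix

/-- The Gaussian density on `ℝ^d` with mean `μ` and covariance matrix `Σ`. -/
noncomputable def gaussDens (d : ℕ) (μ : Fin d → ℝ) (S : Matrix (Fin d) (Fin d) ℝ)
    (y : Fin d → ℝ) : ℝ :=
  (2 * Real.pi) ^ (-(d : ℝ) / 2) * S.det ^ (-(1 : ℝ) / 2) *
    Real.exp (-(1 / 2) * (S⁻¹.mulVec (y - μ) ⬝ᵥ (y - μ)))

/-!
Rescaling `y, μ` by `√t` and `Σ` by `t` reduces the claim to `t = 1`: the density picks up the
Jacobian `t^(-d/2)`, the means shrink by `t^(-1/2)` and the covariances by `t^(-1)`. At `t = 1`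
one changes first the covariance, then the mean. Along the mean, the gradient
`-exp (-½ ⟨Σ⁻¹ z, z⟩) Σ⁻¹ z` of the exponential factor stays bounded because `r exp (-r² / (2Λ))`
does. Along the covariance, `det Σ ≥ Λ^(-d)` together with the Lipschitz bound for the
determinant on bounded matrices controls `(det Σ)^(-1/2)`, while
`Σp⁻¹ - Σq⁻¹ = Σp⁻¹ (Σq - Σp) Σq⁻¹` moves the exponent by `O(|z|² ‖Σp - Σq‖)`, which the decay of
`|z|² exp (-|z|² / (2Λ))` absorbs.
-/

open WithLp
open scoped Matrix.Norms.Frobenius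

section Euclidean

variable {m n : Type*} [Fintype m] [Fintype n]

lemma dotProduct_self_eq_norm_sq (x : n → ℝ) : x ⬝ᵥ x = ‖toLp 2 x‖ ^ 2 := by
  rw [← real_inner_self_eq_norm_sq, EuclideanSpace.inner_toLp_toLp, star_trivial]

lemma abs_dotProduct_le (u v : n → ℝ) : |u ⬝ᵥ v| ≤ ‖toLp 2 u‖ * ‖toLp 2 v‖ := by
  simpa [EuclideanSpace.inner_toLp_toLp, dotProduct_comm] using
    abs_real_inner_le_norm (toLp 2 u) (toLp 2 v)

lemma sum_sq_eq_norm_sq (x : n → ℝ) : ∑ i, x i ^ 2 = ‖toLp 2 x‖ ^ 2 := by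
  simp [EuclideanSpace.norm_sq_eq]

lemma sqrt_sum_sq_eq_norm (x : n → ℝ) : √(∑ i, x i ^ 2) = ‖toLp 2 x‖ := by
  rw [sum_sq_eq_norm_sq, sqrt_sq (norm_nonneg _)]

lemma norm_mulVec_le_frobenius (M : Matrix m n ℝ) (u : n → ℝ) :
    ‖toLp 2 (M *ᵥ u)‖ ≤ ‖M‖ * ‖toLp 2 u‖ :=
  calc ‖toLp 2 (M *ᵥ u)‖ = ‖replicateCol (Fin 1) (M *ᵥ u)‖ :=
        (frobenius_norm_replicateCol _).symm
    _ ≤ ‖M‖ * ‖replicateCol (Fin 1) u‖ := by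
      rw [replicateCol_mulVec]; exact frobenius_norm_mul _ _
    _ = ‖M‖ * ‖toLp 2 u‖ := congrArg (‖M‖ * ·) (frobenius_norm_replicateCol _)

lemma abs_apply_le_frobenius (M : Matrix m n ℝ) (i : m) (j : n) : |M i j| ≤ ‖M‖ :=
  calc |M i j| = ‖toLp 2 (M i) j‖ := rfl
    _ ≤ ‖toLp 2 (M i)‖ := PiLp.norm_apply_le _ j
    _ ≤ ‖M‖ := PiLp.norm_apply_le (toLp 2 fun i => toLp 2 (M i)) i

lemma frobenius_norm_eq_sqrt (M : Matrix m n ℝ) : ‖M‖ = √(∑ i, ∑ j, M i j ^ 2) := by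
  simp [frobenius_norm_def, Real.sqrt_eq_rpow]

end Euclidean

section RealFunctions

lemma abs_exp_sub_exp_le {x y m : ℝ} (hx : x ≤ m) (hy : y ≤ m) :
    |exp x - exp y| ≤ exp m * |x - y| := by
  simpa only [Real.norm_eq_abs, Real.deriv_exp] using
    Convex.norm_image_sub_le_of_norm_deriv_le (fun _ _ => differentiableAt_exp)
      (fun z hz => by simpa using exp_le_exp.2 hz) (convex_Iic m) hy hx

lemma abs_rpow_neg_half_sub_le {x y m : ℝ} (hm : 0 < m) (hx : m ≤ x) (hy : m ≤ y) :
    |x ^ (-(1 : ℝ) / 2) - y ^ (-(1 : ℝ) / 2)| ≤ m ^ (-(3 : ℝ) / 2) / 2 * |x - y| := by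
  have hderiv (z : ℝ) (hz : z ∈ Set.Ici m) :
      ‖deriv (fun z : ℝ => z ^ (-(1 : ℝ) / 2)) z‖ ≤ m ^ (-(3 : ℝ) / 2) / 2 := by
    have hle := rpow_le_rpow_of_nonpos hm hz (by norm_num : -(3 : ℝ) / 2 ≤ 0)
    rw [Real.deriv_rpow_const, norm_mul, Real.norm_of_nonneg (rpow_nonneg (hm.trans_le hz).le _)]
    norm_num at hle ⊢
    linarith
  simpa only [Real.norm_eq_abs] using
    Convex.norm_image_sub_le_of_norm_deriv_le
      (fun z hz => differentiableAt_rpow_const_of_ne _ (hm.trans_le hz).ne') hderiv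
      (convex_Ici m) hy hx

lemma mul_exp_neg_mul_sq_le {a : ℝ} (ha : 0 < a) {r : ℝ} (hr : 0 ≤ r) :
    r * exp (-(a / 2) * r ^ 2) ≤ (√a)⁻¹ := by
  rw [← sqrt_inv, le_sqrt (by positivity) (by positivity)]
  calc (r * exp (-(a / 2) * r ^ 2)) ^ 2 = a⁻¹ * (a * r ^ 2 * exp (-(a * r ^ 2))) := by
        rw [mul_pow, ← exp_nat_mul]; field_simp; push_cast; ring_nf
    _ ≤ a⁻¹ := mul_le_of_le_one_right (by positivity)
        ((mul_exp_neg_le_exp_neg_one _).trans (exp_le_one_iff.2 (by norm_num)))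

lemma sq_rpow_neg_div_two {r : ℝ} (hr : 0 ≤ r) (k : ℕ) :
    (r ^ 2) ^ (-(k : ℝ) / 2) = (r ^ k)⁻¹ := by
  rw [← rpow_natCast r 2, ← rpow_mul hr, ← rpow_natCast, ← rpow_neg hr]
  push_cast
  ring_nf

end RealFunctions

namespace Matrix

-- Only the finiteness of its norm matters: it is the dimensional constant in `abs_det_sub_det_le`.
noncomputable def detRowContinuousMultilinear (n : Type*) [Fintype n] [DecidableEq n] :
    ContinuousMultilinearMap ℝ (fun _ : n => n → ℝ) ℝ :=
  { (detRowAlternating : (n → ℝ) [⋀^n]→ₗ[ℝ] ℝ).toMultilinearMap with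
    cont := continuous_id.matrix_det }

lemma abs_det_sub_det_le {n : Type*} [Fintype n] [DecidableEq n] (A B : Matrix n n ℝ) {R ε : ℝ}
    (hA : ∀ i j, |A i j| ≤ R) (hB : ∀ i j, |B i j| ≤ R) (hAB : ∀ i j, |A i j - B i j| ≤ ε) :
    |A.det - B.det| ≤
      ‖detRowContinuousMultilinear n‖ * Fintype.card n * R ^ (Fintype.card n - 1) * ε := by
  rcases isEmpty_or_nonempty n with _ | ⟨⟨i⟩⟩
  · simp
  have entrywise {M : n → n → ℝ} {r : ℝ} (hM : ∀ i j, |M i j| ≤ r) : ‖M‖ ≤ r :=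
    have hr : 0 ≤ r := (abs_nonneg _).trans (hM i i)
    (pi_norm_le_iff_of_nonneg hr).2 fun i => (pi_norm_le_iff_of_nonneg hr).2 (hM i)
  have hR : 0 ≤ R := (abs_nonneg _).trans (hA i i)
  calc |A.det - B.det|
      = ‖detRowContinuousMultilinear n A - detRowContinuousMultilinear n B‖ := rfl
    _ ≤ _ := (detRowContinuousMultilinear n).norm_image_sub_le A B
    _ ≤ _ := by
      gcongr
      · exact (norm_nonneg _).trans (le_max_left _ _)
      · exact max_le (entrywise hA) (entrywise hB)
      · exact entrywise hAB

variable {n : Type*} [Fintype n] {S : Matrix n n ℝ} {α β : ℝ}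

lemma IsSymm.mulVec_dotProduct_comm (hS : S.IsSymm) (u v : n → ℝ) :
    S *ᵥ u ⬝ᵥ v = S *ᵥ v ⬝ᵥ u := by
  rw [dotProduct_comm, dotProduct_mulVec, ← mulVec_transpose, hS.eq]

lemma IsSymm.sq_mulVec_dotProduct_le (hS : S.IsSymm) (h0 : ∀ x, 0 ≤ S *ᵥ x ⬝ᵥ x)
    (u v : n → ℝ) : (S *ᵥ u ⬝ᵥ v) ^ 2 ≤ (S *ᵥ u ⬝ᵥ u) * (S *ᵥ v ⬝ᵥ v) := by
  have hquad : ∀ s : ℝ,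
      0 ≤ (S *ᵥ v ⬝ᵥ v) * (s * s) + 2 * (S *ᵥ u ⬝ᵥ v) * s + S *ᵥ u ⬝ᵥ u := by
    intro s
    convert h0 (u + s • v) using 1
    simp only [mulVec_add, mulVec_smul, add_dotProduct, dotProduct_add, smul_dotProduct,
      dotProduct_smul, smul_eq_mul, hS.mulVec_dotProduct_comm v u]
    ring
  have := discrim_le_zero hquad
  rw [discrim] at this
  linarith

/-- `α I ≤ S ≤ β I` in the sense of quadratic forms. -/
structure IsUniformlyElliptic (α β : ℝ) (S : Matrix n n ℝ) : Prop where
  isSymm : S.IsSymm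
  le_quad : ∀ x, α * ‖toLp 2 x‖ ^ 2 ≤ S *ᵥ x ⬝ᵥ x
  quad_le : ∀ x, S *ᵥ x ⬝ᵥ x ≤ β * ‖toLp 2 x‖ ^ 2

namespace IsUniformlyElliptic

lemma quad_nonneg (h : S.IsUniformlyElliptic α β) (hα : 0 ≤ α) (x : n → ℝ) :
    0 ≤ S *ᵥ x ⬝ᵥ x :=
  (mul_nonneg hα (sq_nonneg _)).trans (h.le_quad x)

lemma norm_mulVec_sq_le (h : S.IsUniformlyElliptic α β) (hα : 0 ≤ α) (hβ : 0 ≤ β)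
    (x : n → ℝ) :
    ‖toLp 2 (S *ᵥ x)‖ ^ 2 ≤ β * (S *ᵥ x ⬝ᵥ x) := by
  have hcs := h.isSymm.sq_mulVec_dotProduct_le (h.quad_nonneg hα) x (S *ᵥ x)
  rw [dotProduct_self_eq_norm_sq] at hcs
  have hSx := h.quad_le (S *ᵥ x)
  have hq := h.quad_nonneg hα x
  rcases (sq_nonneg ‖toLp 2 (S *ᵥ x)‖).eq_or_lt with h0 | hpos
  · rw [← h0]; exact mul_nonneg hβ hq
  · nlinarith

lemma abs_apply_le [DecidableEq n] (h : S.IsUniformlyElliptic α β) (hα : 0 ≤ α) (i j : n) :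
    |S i j| ≤ β := by
  set e : n → ℝ := Pi.single j 1
  have he : ‖toLp 2 e‖ = 1 := by simp [e]
  have hjj := h.quad_le e
  rw [he] at hjj
  have hβ : 0 ≤ β := by
    have := h.le_quad e
    rw [he] at this
    linarith [h.quad_nonneg hα e]
  have hcol := h.norm_mulVec_sq_le hα hβ e
  have : ‖toLp 2 (S *ᵥ e)‖ ≤ β := by
    nlinarith [norm_nonneg (toLp 2 (S *ᵥ e)), h.quad_nonneg hα e]
  calc |S i j| = ‖toLp 2 (S *ᵥ e) i‖ := by simp [e]
    _ ≤ _ := (PiLp.norm_apply_le _ i).trans this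

lemma pow_card_le_det [DecidableEq n] (h : S.IsUniformlyElliptic α β) (hα : 0 ≤ α) :
    α ^ Fintype.card n ≤ S.det := by
  have hH : S.IsHermitian := h.isSymm
  rw [hH.det_eq_prod_eigenvalues, ← Finset.card_univ, ← Finset.prod_const]
  refine Finset.prod_le_prod (fun _ _ => hα) fun i _ => ?_
  have hv := h.le_quad (hH.eigenvectorBasis i)
  rw [hH.eigenvectorBasis.norm_eq_one i] at hv
  simpa [hH.eigenvalues_eq i, dotProduct_comm] using hv

lemma det_pos [DecidableEq n] (h : S.IsUniformlyElliptic α β) (hα : 0 < α) : 0 < S.det :=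
  (pow_pos hα _).trans_le (h.pow_card_le_det hα.le)

lemma isUnit_det [DecidableEq n] (h : S.IsUniformlyElliptic α β) (hα : 0 < α) : IsUnit S.det :=
  (h.det_pos hα).ne'.isUnit

lemma mulVec_inv_mulVec [DecidableEq n] (h : S.IsUniformlyElliptic α β) (hα : 0 < α)
    (x : n → ℝ) : S *ᵥ (S⁻¹ *ᵥ x) = x := by
  rw [mulVec_mulVec, mul_nonsing_inv _ (h.isUnit_det hα), one_mulVec]

lemma norm_inv_mulVec_le [DecidableEq n] (h : S.IsUniformlyElliptic α β) (hα : 0 < α)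
    (x : n → ℝ) :
    ‖toLp 2 (S⁻¹ *ᵥ x)‖ ≤ α⁻¹ * ‖toLp 2 x‖ := by
  set y := S⁻¹ *ᵥ x
  have hx : S *ᵥ y = x := h.mulVec_inv_mulVec hα x
  have hle : α * ‖toLp 2 y‖ ^ 2 ≤ ‖toLp 2 x‖ * ‖toLp 2 y‖ := by
    calc _ ≤ S *ᵥ y ⬝ᵥ y := h.le_quad y
      _ ≤ _ := hx ▸ (le_abs_self _).trans (abs_dotProduct_le _ _)
  rw [le_inv_mul_iff₀ hα]
  rcases (norm_nonneg (toLp 2 y)).eq_or_lt with h0 | hpos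
  · rw [← h0, mul_zero]; exact norm_nonneg _
  · nlinarith

lemma le_inv_quad [DecidableEq n] (h : S.IsUniformlyElliptic α β) (hα : 0 < α)
    (x : n → ℝ) :
    β⁻¹ * ‖toLp 2 x‖ ^ 2 ≤ S⁻¹ *ᵥ x ⬝ᵥ x := by
  set y := S⁻¹ *ᵥ x
  have hx : S *ᵥ y = x := h.mulVec_inv_mulVec hα x
  have hq : S⁻¹ *ᵥ x ⬝ᵥ x = S *ᵥ y ⬝ᵥ y := by rw [hx, dotProduct_comm]
  rw [hq]
  rcases le_or_gt β 0 with hβ | hβ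
  · exact (mul_nonpos_of_nonpos_of_nonneg (inv_nonpos.2 hβ) (sq_nonneg _)).trans
      (h.quad_nonneg hα.le y)
  · rw [inv_mul_le_iff₀ hβ, ← hx]
    exact h.norm_mulVec_sq_le hα.le hβ.le y

lemma smul (h : S.IsUniformlyElliptic α β) {c : ℝ} (hc : 0 ≤ c) :
    (c • S).IsUniformlyElliptic (c * α) (c * β) where
  isSymm := h.isSymm.smul c
  le_quad x := by
    rw [smul_mulVec, smul_dotProduct, smul_eq_mul, mul_assoc]
    exact mul_le_mul_of_nonneg_left (h.le_quad x) hc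
  quad_le x := by
    rw [smul_mulVec, smul_dotProduct, smul_eq_mul, mul_assoc]
    exact mul_le_mul_of_nonneg_left (h.quad_le x) hc

lemma inv_sq_smul {r : ℝ} (h : S.IsUniformlyElliptic (α * r ^ 2) (β * r ^ 2)) (hr : r ≠ 0) :
    ((r ^ 2)⁻¹ • S).IsUniformlyElliptic α β := by
  convert h.smul (inv_nonneg.2 (sq_nonneg r)) using 1 <;> field_simp

lemma of_sum_sq (hS : S.IsSymm) (hl : ∀ x : n → ℝ, α * ∑ i, x i ^ 2 ≤ S *ᵥ x ⬝ᵥ x)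
    (hu : ∀ x : n → ℝ, S *ᵥ x ⬝ᵥ x ≤ β * ∑ i, x i ^ 2) : S.IsUniformlyElliptic α β :=
  ⟨hS, fun x => sum_sq_eq_norm_sq x ▸ hl x, fun x => sum_sq_eq_norm_sq x ▸ hu x⟩

end IsUniformlyElliptic

end Matrix

noncomputable def gaussKernel {n : Type*} [Fintype n] (A : Matrix n n ℝ) (z : n → ℝ) : ℝ :=
  exp (-(1 / 2) * (A *ᵥ z ⬝ᵥ z))

section gaussKernel

variable {n : Type*} [Fintype n] {A : Matrix n n ℝ} {a b : ℝ}

lemma gaussKernel_pos (A : Matrix n n ℝ) (z : n → ℝ) : 0 < gaussKernel A z :=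
  exp_pos _

lemma gaussKernel_le (hlow : ∀ x, a * ‖toLp 2 x‖ ^ 2 ≤ A *ᵥ x ⬝ᵥ x) (z : n → ℝ) :
    gaussKernel A z ≤ exp (-(a / 2) * ‖toLp 2 z‖ ^ 2) :=
  exp_le_exp.2 (by linarith [hlow z])

lemma Matrix.IsSymm.quad_add_smul (hA : A.IsSymm) (w δ : n → ℝ) (s : ℝ) :
    A *ᵥ (w + s • δ) ⬝ᵥ (w + s • δ) =
      A *ᵥ w ⬝ᵥ w + 2 * s * (A *ᵥ w ⬝ᵥ δ) + s ^ 2 * (A *ᵥ δ ⬝ᵥ δ) := by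
  simp only [mulVec_add, mulVec_smul, add_dotProduct, dotProduct_add, smul_dotProduct,
    dotProduct_smul, smul_eq_mul, hA.mulVec_dotProduct_comm δ w]
  ring

lemma hasDerivAt_gaussKernel_line (hA : A.IsSymm) (w δ : n → ℝ) (s : ℝ) :
    HasDerivAt (fun s : ℝ => gaussKernel A (w + s • δ))
      (-(A *ᵥ (w + s • δ) ⬝ᵥ δ) * gaussKernel A (w + s • δ)) s := by
  set p := A *ᵥ w ⬝ᵥ δ
  set q := A *ᵥ δ ⬝ᵥ δ
  have hpoly : HasDerivAt (fun s : ℝ => A *ᵥ w ⬝ᵥ w + 2 * s * p + s ^ 2 * q)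
      (2 * p + 2 * s * q) s := by
    have h := (((hasDerivAt_id s).const_mul (2 * p)).add
      ((hasDerivAt_pow 2 s).const_mul q)).const_add (A *ᵥ w ⬝ᵥ w)
    refine (h.congr_deriv (by norm_num; ring)).congr_of_eventuallyEq
      (Filter.Eventually.of_forall fun x => ?_)
    simp only [id, Pi.add_apply]; ring
  have hline : A *ᵥ (w + s • δ) ⬝ᵥ δ = p + s * q := by
    simp only [mulVec_add, mulVec_smul, add_dotProduct, smul_dotProduct, smul_eq_mul, p, q]
  unfold gaussKernel
  simp only [hA.quad_add_smul, hline]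
  convert (hpoly.const_mul (-(1 / 2))).exp using 1
  ring

lemma abs_gaussKernel_sub_le (hA : A.IsSymm) (ha : 0 < a) (hb : 0 ≤ b)
    (hlow : ∀ x, a * ‖toLp 2 x‖ ^ 2 ≤ A *ᵥ x ⬝ᵥ x)
    (hnorm : ∀ x, ‖toLp 2 (A *ᵥ x)‖ ≤ b * ‖toLp 2 x‖) (z w : n → ℝ) :
    |gaussKernel A z - gaussKernel A w| ≤ b / √a * ‖toLp 2 (z - w)‖ := by
  set δ := z - w
  have hbound (s : ℝ) : ‖-(A *ᵥ (w + s • δ) ⬝ᵥ δ) * gaussKernel A (w + s • δ)‖ ≤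
      b / √a * ‖toLp 2 δ‖ := by
    set v := w + s • δ
    have hK := gaussKernel_pos A v
    calc ‖-(A *ᵥ v ⬝ᵥ δ) * gaussKernel A v‖ = |A *ᵥ v ⬝ᵥ δ| * gaussKernel A v := by
          rw [norm_mul, norm_neg, Real.norm_eq_abs, Real.norm_of_nonneg hK.le]
      _ ≤ b * ‖toLp 2 v‖ * ‖toLp 2 δ‖ * exp (-(a / 2) * ‖toLp 2 v‖ ^ 2) := by
          gcongr
          · exact (abs_dotProduct_le _ _).trans (by gcongr; exact hnorm v)
          · exact gaussKernel_le hlow v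
      _ = b * ‖toLp 2 δ‖ * (‖toLp 2 v‖ * exp (-(a / 2) * ‖toLp 2 v‖ ^ 2)) := by ring
      _ ≤ b * ‖toLp 2 δ‖ * (√a)⁻¹ := by gcongr; exact mul_exp_neg_mul_sq_le ha (norm_nonneg _)
      _ = b / √a * ‖toLp 2 δ‖ := by ring
  have := norm_image_sub_le_of_norm_deriv_le_segment_01'
    (fun s _ => (hasDerivAt_gaussKernel_line hA w δ s).hasDerivWithinAt) (fun s _ => hbound s)
  simpa [δ] using this

lemma Matrix.IsUniformlyElliptic.abs_gaussKernel_inv_sub_le [DecidableEq n]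
    {Sp Sq : Matrix n n ℝ} {α β : ℝ} (hp : Sp.IsUniformlyElliptic α β)
    (hq : Sq.IsUniformlyElliptic α β) (hα : 0 < α) (hβ : 0 < β) (z : n → ℝ) :
    |gaussKernel Sp⁻¹ z - gaussKernel Sq⁻¹ z| ≤ β / α ^ 2 * ‖Sp - Sq‖ := by
  have hresolvent : Sp⁻¹ * (Sq - Sp) * Sq⁻¹ = Sp⁻¹ - Sq⁻¹ := by
    rw [Matrix.mul_sub, Matrix.sub_mul, Matrix.mul_assoc, mul_nonsing_inv _ (hq.isUnit_det hα),
      nonsing_inv_mul _ (hp.isUnit_det hα), Matrix.mul_one, Matrix.one_mul]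
  have hdiff : Sp⁻¹ *ᵥ z ⬝ᵥ z - Sq⁻¹ *ᵥ z ⬝ᵥ z = (Sq - Sp) *ᵥ (Sq⁻¹ *ᵥ z) ⬝ᵥ (Sp⁻¹ *ᵥ z) := by
    rw [← sub_dotProduct, ← sub_mulVec, ← hresolvent, ← mulVec_mulVec, ← mulVec_mulVec,
      hp.isSymm.inv.mulVec_dotProduct_comm, dotProduct_comm]
  have hdiff_le : |Sp⁻¹ *ᵥ z ⬝ᵥ z - Sq⁻¹ *ᵥ z ⬝ᵥ z| ≤
      ‖Sp - Sq‖ * (α⁻¹ * ‖toLp 2 z‖) * (α⁻¹ * ‖toLp 2 z‖) := by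
    rw [hdiff, ← norm_neg (Sp - Sq), neg_sub]
    refine (abs_dotProduct_le _ _).trans ?_
    gcongr
    · exact (norm_mulVec_le_frobenius _ _).trans (by gcongr; exact hq.norm_inv_mulVec_le hα z)
    · exact hp.norm_inv_mulVec_le hα z
  set u := β⁻¹ / 2 * ‖toLp 2 z‖ ^ 2
  have hexp_le {S : Matrix n n ℝ} (hS : S.IsUniformlyElliptic α β) :
      -(1 / 2) * (S⁻¹ *ᵥ z ⬝ᵥ z) ≤ -u := by
    have := hS.le_inv_quad hα z
    simp only [u]
    linarith
  calc |gaussKernel Sp⁻¹ z - gaussKernel Sq⁻¹ z|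
      ≤ exp (-u) * |-(1 / 2) * (Sp⁻¹ *ᵥ z ⬝ᵥ z) - -(1 / 2) * (Sq⁻¹ *ᵥ z ⬝ᵥ z)| :=
        abs_exp_sub_exp_le (hexp_le hp) (hexp_le hq)
    _ ≤ exp (-u) * (1 / 2 * (‖Sp - Sq‖ * (α⁻¹ * ‖toLp 2 z‖) * (α⁻¹ * ‖toLp 2 z‖))) := by
        rw [← mul_sub, abs_mul, abs_neg, abs_of_pos (by norm_num : (0 : ℝ) < 1 / 2)]
        gcongr
    _ = β / α ^ 2 * ‖Sp - Sq‖ * (u * exp (-u)) := by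
        simp only [u]; field_simp
    _ ≤ β / α ^ 2 * ‖Sp - Sq‖ := mul_le_of_le_one_right (by positivity)
        ((mul_exp_neg_le_exp_neg_one u).trans (exp_le_one_iff.2 (by norm_num)))

end gaussKernel

section gaussDens

variable {d : ℕ}

lemma gaussDens_eq_mul_gaussKernel (μ : Fin d → ℝ) (S : Matrix (Fin d) (Fin d) ℝ)
    (y : Fin d → ℝ) :
    gaussDens d μ S y =
      (2 * π) ^ (-(d : ℝ) / 2) * S.det ^ (-(1 : ℝ) / 2) * gaussKernel S⁻¹ (y - μ) :=
  rfl

lemma two_mul_pi_rpow_le_one (d : ℕ) : (2 * π) ^ (-(d : ℝ) / 2) ≤ 1 :=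
  rpow_le_one_of_one_le_of_nonpos (by linarith [pi_gt_three])
    (by linarith [(Nat.cast_nonneg d : (0 : ℝ) ≤ d)])

lemma gaussDens_eq_smul {r : ℝ} (hr : 0 < r) (μ : Fin d → ℝ) {S : Matrix (Fin d) (Fin d) ℝ}
    (hS : 0 < S.det) (y : Fin d → ℝ) :
    gaussDens d μ S y = (r ^ d)⁻¹ * gaussDens d (r⁻¹ • μ) ((r ^ 2)⁻¹ • S) (r⁻¹ • y) := by
  have hdet : ((r ^ 2)⁻¹ • S).det ^ (-(1 : ℝ) / 2) = r ^ d * S.det ^ (-(1 : ℝ) / 2) := by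
    rw [det_smul, Fintype.card_fin, mul_rpow (by positivity) hS.le, inv_pow, ← pow_mul,
      mul_comm 2 d, pow_mul, inv_rpow (by positivity), ← Nat.cast_one,
      sq_rpow_neg_div_two (by positivity), pow_one, inv_inv]
  have hinv : ((r ^ 2)⁻¹ • S)⁻¹ = r ^ 2 • S⁻¹ := inv_eq_left_inv <| by
    rw [smul_mul_smul_comm, nonsing_inv_mul _ hS.ne'.isUnit, mul_inv_cancel₀ (by positivity),
      one_smul]
  have hkernel : gaussKernel (r ^ 2 • S⁻¹) (r⁻¹ • y - r⁻¹ • μ) = gaussKernel S⁻¹ (y - μ) := by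
    simp only [gaussKernel, ← smul_sub, smul_mulVec, mulVec_smul, smul_dotProduct,
      dotProduct_smul, smul_eq_mul]
    field_simp
  rw [gaussDens_eq_mul_gaussKernel, gaussDens_eq_mul_gaussKernel, hdet, hinv, hkernel]
  field_simp

noncomputable def gaussDensMeanConst (d : ℕ) (α β : ℝ) : ℝ :=
  (α ^ d) ^ (-(1 : ℝ) / 2) * (α⁻¹ / √β⁻¹)

noncomputable def gaussDensCovConst (d : ℕ) (α β : ℝ) : ℝ :=
  (α ^ d) ^ (-(3 : ℝ) / 2) / 2 * (‖detRowContinuousMultilinear (Fin d)‖ * d * β ^ (d - 1)) +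
    (α ^ d) ^ (-(1 : ℝ) / 2) * (β / α ^ 2)

namespace Matrix.IsUniformlyElliptic

variable {S Sp Sq : Matrix (Fin d) (Fin d) ℝ} {α β : ℝ}

lemma det_rpow_neg_half_le (h : S.IsUniformlyElliptic α β) (hα : 0 < α) :
    S.det ^ (-(1 : ℝ) / 2) ≤ (α ^ d) ^ (-(1 : ℝ) / 2) := by
  have := h.pow_card_le_det hα.le
  rw [Fintype.card_fin] at this
  exact rpow_le_rpow_of_nonpos (by positivity) this (by norm_num)

lemma abs_gaussDens_mean_sub_le (h : S.IsUniformlyElliptic α β) (hα : 0 < α) (hβ : 0 < β)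
    (μp μq y : Fin d → ℝ) :
    |gaussDens d μp S y - gaussDens d μq S y| ≤
      gaussDensMeanConst d α β * ‖toLp 2 (μp - μq)‖ := by
  have hK := abs_gaussKernel_sub_le h.isSymm.inv (inv_pos.2 hβ) (inv_nonneg.2 hα.le)
    (h.le_inv_quad hα) (h.norm_inv_mulVec_le hα) (y - μp) (y - μq)
  rw [sub_sub_sub_cancel_left, ← norm_neg, ← toLp_neg, neg_sub] at hK
  have hdet := h.det_pos hα
  rw [gaussDens_eq_mul_gaussKernel, gaussDens_eq_mul_gaussKernel, ← mul_sub, abs_mul,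
    abs_of_pos (by positivity), mul_assoc]
  calc (2 * π) ^ (-(d : ℝ) / 2) * (S.det ^ (-(1 : ℝ) / 2) *
        |gaussKernel S⁻¹ (y - μp) - gaussKernel S⁻¹ (y - μq)|)
      ≤ 1 * ((α ^ d) ^ (-(1 : ℝ) / 2) * (α⁻¹ / √β⁻¹ * ‖toLp 2 (μp - μq)‖)) :=
        mul_le_mul (two_mul_pi_rpow_le_one d)
          (mul_le_mul (h.det_rpow_neg_half_le hα) hK (abs_nonneg _) (by positivity))
          (by positivity) zero_le_one
    _ = _ := by rw [gaussDensMeanConst]; ring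

lemma abs_det_rpow_neg_half_sub_le (hp : Sp.IsUniformlyElliptic α β)
    (hq : Sq.IsUniformlyElliptic α β) (hα : 0 < α) :
    |Sp.det ^ (-(1 : ℝ) / 2) - Sq.det ^ (-(1 : ℝ) / 2)| ≤ (α ^ d) ^ (-(3 : ℝ) / 2) / 2 *
      (‖detRowContinuousMultilinear (Fin d)‖ * d * β ^ (d - 1) * ‖Sp - Sq‖) := by
  have hlow_p := hp.pow_card_le_det hα.le
  have hlow_q := hq.pow_card_le_det hα.le
  rw [Fintype.card_fin] at hlow_p hlow_q
  refine (abs_rpow_neg_half_sub_le (pow_pos hα d) hlow_p hlow_q).trans ?_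
  gcongr
  simpa using abs_det_sub_det_le Sp Sq (hp.abs_apply_le hα.le) (hq.abs_apply_le hα.le)
    (abs_apply_le_frobenius (Sp - Sq))

lemma abs_gaussDens_cov_sub_le (hp : Sp.IsUniformlyElliptic α β) (hq : Sq.IsUniformlyElliptic α β)
    (hα : 0 < α) (hβ : 0 < β) (μ y : Fin d → ℝ) :
    |gaussDens d μ Sp y - gaussDens d μ Sq y| ≤ gaussDensCovConst d α β * ‖Sp - Sq‖ := by
  set z := y - μ
  have hK := hp.abs_gaussKernel_inv_sub_le hq hα hβ z
  have hK_le_one : gaussKernel Sp⁻¹ z ≤ 1 := by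
    have := hp.le_inv_quad hα z
    exact exp_le_one_iff.2 (by nlinarith [sq_nonneg ‖toLp 2 z‖, inv_pos.2 hβ])
  have hdet_p := hp.det_pos hα
  have hdet_q := hq.det_pos hα
  rw [gaussDens_eq_mul_gaussKernel, gaussDens_eq_mul_gaussKernel]
  set c := (2 * π) ^ (-(d : ℝ) / 2)
  set ap := Sp.det ^ (-(1 : ℝ) / 2)
  set aq := Sq.det ^ (-(1 : ℝ) / 2)
  have hsplit : c * ap * gaussKernel Sp⁻¹ z - c * aq * gaussKernel Sq⁻¹ z =
      c * ((ap - aq) * gaussKernel Sp⁻¹ z + aq * (gaussKernel Sp⁻¹ z - gaussKernel Sq⁻¹ z)) := by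
    ring
  rw [hsplit, abs_mul, abs_of_pos (by positivity : 0 < c)]
  calc c * |(ap - aq) * gaussKernel Sp⁻¹ z + aq * (gaussKernel Sp⁻¹ z - gaussKernel Sq⁻¹ z)|
      ≤ 1 * (|ap - aq| * 1 + (α ^ d) ^ (-(1 : ℝ) / 2) *
          |gaussKernel Sp⁻¹ z - gaussKernel Sq⁻¹ z|) := by
        refine mul_le_mul (two_mul_pi_rpow_le_one d) ((abs_add_le _ _).trans ?_) (abs_nonneg _)
          zero_le_one
        rw [abs_mul, abs_mul, abs_of_pos (gaussKernel_pos _ _), abs_of_pos (by positivity : 0 < aq)]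
        gcongr
        exact hq.det_rpow_neg_half_le hα
    _ ≤ _ := by
        rw [one_mul, mul_one]
        grw [hp.abs_det_rpow_neg_half_sub_le hq hα, hK]
        exact le_of_eq (by rw [gaussDensCovConst]; ring)

lemma abs_gaussDens_sub_le (hp : Sp.IsUniformlyElliptic α β) (hq : Sq.IsUniformlyElliptic α β)
    (hα : 0 < α) (hβ : 0 < β) (μp μq y : Fin d → ℝ) :
    |gaussDens d μp Sp y - gaussDens d μq Sq y| ≤
      gaussDensCovConst d α β * ‖Sp - Sq‖ + gaussDensMeanConst d α β * ‖toLp 2 (μp - μq)‖ :=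
  (abs_sub_le _ (gaussDens d μp Sq y) _).trans <| add_le_add
    (hp.abs_gaussDens_cov_sub_le hq hα hβ μp y) (hq.abs_gaussDens_mean_sub_le hα hβ μp μq y)

lemma abs_gaussDens_sub_le_of_scale {r : ℝ} (hp : Sp.IsUniformlyElliptic (α * r ^ 2) (β * r ^ 2))
    (hq : Sq.IsUniformlyElliptic (α * r ^ 2) (β * r ^ 2)) (hα : 0 < α) (hβ : 0 < β) (hr : 0 < r)
    (μp μq y : Fin d → ℝ) :
    |gaussDens d μp Sp y - gaussDens d μq Sq y| ≤ (r ^ (d + 1))⁻¹ *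
      (gaussDensCovConst d α β * (r⁻¹ * ‖Sp - Sq‖) +
        gaussDensMeanConst d α β * ‖toLp 2 (μp - μq)‖) := by
  have key := (hp.inv_sq_smul hr.ne').abs_gaussDens_sub_le (hq.inv_sq_smul hr.ne') hα hβ
    (r⁻¹ • μp) (r⁻¹ • μq) (r⁻¹ • y)
  rw [← smul_sub, ← smul_sub, toLp_smul, norm_smul, norm_smul, norm_inv, norm_inv,
    norm_of_nonneg hr.le, norm_of_nonneg (sq_nonneg r)] at key
  rw [gaussDens_eq_smul hr μp (hp.det_pos (by positivity)) y,
    gaussDens_eq_smul hr μq (hq.det_pos (by positivity)) y, ← mul_sub, abs_mul,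
    abs_of_pos (by positivity)]
  calc _ ≤ (r ^ d)⁻¹ * (gaussDensCovConst d α β * ((r ^ 2)⁻¹ * ‖Sp - Sq‖) +
        gaussDensMeanConst d α β * (r⁻¹ * ‖toLp 2 (μp - μq)‖)) := by gcongr
    _ = _ := by field_simp; ring

end Matrix.IsUniformlyElliptic

end gaussDens

/-- uniform comparison of two Gaussian densities with comparable
means and covariances under the ellipticity condition `Λ⁻¹ t I ≤ Σ ≤ Λ t I`. -/
theorem stmt_17 (d : ℕ) (Λ : ℝ) (hΛ : 1 ≤ Λ) :
    ∃ C > 0,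
      ∀ (t : ℝ), 0 < t →
      ∀ (μp μq : Fin d → ℝ) (Sp Sq : Matrix (Fin d) (Fin d) ℝ),
        Sp.IsSymm → Sq.IsSymm →
        (∀ x : Fin d → ℝ, Λ⁻¹ * t * (∑ i, x i ^ 2) ≤ Sp.mulVec x ⬝ᵥ x) →
        (∀ x : Fin d → ℝ, Sp.mulVec x ⬝ᵥ x ≤ Λ * t * (∑ i, x i ^ 2)) →
        (∀ x : Fin d → ℝ, Λ⁻¹ * t * (∑ i, x i ^ 2) ≤ Sq.mulVec x ⬝ᵥ x) →
        (∀ x : Fin d → ℝ, Sq.mulVec x ⬝ᵥ x ≤ Λ * t * (∑ i, x i ^ 2)) →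
        ∀ y : Fin d → ℝ,
          |gaussDens d μp Sp y - gaussDens d μq Sq y| ≤
            C * t ^ (-((d : ℝ) + 1) / 2) *
              (Real.sqrt (∑ i, (μp i - μq i) ^ 2) +
                t ^ (-(1 : ℝ) / 2) *
                  Real.sqrt (∑ i, ∑ j, (Sp i j - Sq i j) ^ 2)) := by
  have hΛ0 : 0 < Λ := one_pos.trans_le hΛ
  have hα : 0 < Λ⁻¹ := inv_pos.2 hΛ0
  set Ccov := gaussDensCovConst d Λ⁻¹ Λ
  set Cmean := gaussDensMeanConst d Λ⁻¹ Λ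
  have hCcov : 0 ≤ Ccov := by simp only [Ccov, gaussDensCovConst]; positivity
  have hCmean : 0 < Cmean := by simp only [Cmean, gaussDensMeanConst]; positivity
  refine ⟨Ccov + Cmean, by positivity, ?_⟩
  intro t ht μp μq Sp Sq hSp hSq hpl hpu hql hqu y
  obtain ⟨r, hr, rfl⟩ : ∃ r, 0 < r ∧ t = r ^ 2 := ⟨√t, sqrt_pos.2 ht, (sq_sqrt ht.le).symm⟩
  have key := (IsUniformlyElliptic.of_sum_sq hSp hpl hpu).abs_gaussDens_sub_le_of_scale
    (IsUniformlyElliptic.of_sum_sq hSq hql hqu) hα hΛ0 hr μp μq y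
  have hpow : (r ^ 2) ^ (-((d : ℝ) + 1) / 2) = (r ^ (d + 1))⁻¹ := by
    exact_mod_cast sq_rpow_neg_div_two hr.le (d + 1)
  have hpow' : (r ^ 2) ^ (-(1 : ℝ) / 2) = r⁻¹ := by simpa using sq_rpow_neg_div_two hr.le 1
  have hμ : √(∑ i, (μp i - μq i) ^ 2) = ‖toLp 2 (μp - μq)‖ := sqrt_sum_sq_eq_norm _
  have hS : √(∑ i, ∑ j, (Sp i j - Sq i j) ^ 2) = ‖Sp - Sq‖ := (frobenius_norm_eq_sqrt _).symm
  rw [hμ, hS, hpow, hpow']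
  have hgap : 0 ≤ (r ^ (d + 1))⁻¹ *
      (Ccov * ‖toLp 2 (μp - μq)‖ + Cmean * (r⁻¹ * ‖Sp - Sq‖)) := by positivity
  linarith
end
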